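/- Fix positive real numbers k, λ and t^P, and for u > 0 set v = k·u, h = 1/u + 1/v, g = 1/λ + u/(v(u+v+λ)) − h, and q = 1/(uv) − (v+λ)/(v(u+v+λ)²). Define R(u) = ( h²e^{2u t^P} + (h(g − t^P) − 1/(uv))e^{u t^P} + g/λ + q )/( h e^{u t^P} + g ). Then R(u) tends to +∞ as u tends to +∞. -/

import Mathlib

open Real Filter Set

noncomputable def rBarU (k lam tP u : ℝ) : ℝ :=
  let v := k * u
  let h := 1 / u + 1 / v
  let g := 1 / lam + u / (v * (u + v + lam)) - h
  let q := 1 / (u * v) - (v + lam) / (v * (u + v + lam) ^ 2)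
  (h ^ 2 * Real.exp (2 * u * tP) + (h * (g - tP) - 1 / (u * v)) * Real.exp (u * tP)
      + g / lam + q) / (h * Real.exp (u * tP) + g)

/-!
Write `E = exp (u tP)`. Since `h² - h/u = h/v`, subtracting `(E/u - (tP + 1))·(hE + g)` from the
numerator of `R` leaves `(h/v)E² + (g/v + (u + v - 1)/(uv))E + g/λ + q + (tP + 1)g`, which is
nonnegative as soon as `g, q ≥ 0` and `u + v ≥ 1`. Now `q ≥ 0` always, and `g ≥ 0` once `h ≤ 1/λ`,
which holds for large `u` because `h = (1 + 1/k)/u → 0`. Hence `R ≥ E/u - (tP + 1) → ∞`.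
-/

namespace RBarU

noncomputable def hCoef (u v : ℝ) : ℝ := 1 / u + 1 / v

noncomputable def gCoef (u v lam : ℝ) : ℝ := 1 / lam + u / (v * (u + v + lam)) - hCoef u v

noncomputable def qCoef (u v lam : ℝ) : ℝ := 1 / (u * v) - (v + lam) / (v * (u + v + lam) ^ 2)

lemma rBarU_eq (k lam tP u : ℝ) :
    rBarU k lam tP u =
      (hCoef u (k * u) ^ 2 * exp (u * tP) ^ 2
          + (hCoef u (k * u) * (gCoef u (k * u) lam - tP) - 1 / (u * (k * u))) * exp (u * tP)
          + gCoef u (k * u) lam / lam + qCoef u (k * u) lam)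
        / (hCoef u (k * u) * exp (u * tP) + gCoef u (k * u) lam) := by
  rw [← exp_nat_mul, Nat.cast_ofNat, ← mul_assoc]
  rfl

variable {u v lam : ℝ}

lemma tendsto_hCoef_mul_self {k : ℝ} (hk : 0 < k) :
    Tendsto (fun u => hCoef u (k * u)) atTop (nhds 0) := by
  have hinv : Tendsto (fun u : ℝ => (1 + 1 / k) * u⁻¹) atTop (nhds 0) := by
    simpa using tendsto_inv_atTop_zero.const_mul (1 + 1 / k)
  refine hinv.congr' ?_
  filter_upwards [eventually_gt_atTop 0] with u hu
  simp only [hCoef]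
  field_simp

lemma gCoef_nonneg (hu : 0 < u) (hv : 0 < v) (hlam : 0 < lam) (hh : hCoef u v ≤ 1 / lam) :
    0 ≤ gCoef u v lam := by
  have : 0 ≤ u / (v * (u + v + lam)) := by positivity
  unfold gCoef
  linarith

lemma qCoef_nonneg (hu : 0 < u) (hv : 0 < v) (hlam : 0 < lam) : 0 ≤ qCoef u v lam := by
  rw [qCoef, sub_nonneg, div_le_div_iff₀ (by positivity) (by positivity)]
  nlinarith [sq_nonneg (u - (v + lam)), mul_pos hu (add_pos hv hlam)]

lemma sub_le_ratio {tP G Q E : ℝ} (hu : 0 < u) (hv : 0 < v) (hlam : 0 < lam) (htP : 0 ≤ tP)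
    (huv : 1 ≤ u + v) (hG : 0 ≤ G) (hQ : 0 ≤ Q) (hE : 0 < E) :
    E / u - (tP + 1) ≤
      (hCoef u v ^ 2 * E ^ 2 + (hCoef u v * (G - tP) - 1 / (u * v)) * E + G / lam + Q)
        / (hCoef u v * E + G) := by
  have hh : 0 < hCoef u v := by unfold hCoef; positivity
  rw [le_div_iff₀ (by positivity), ← sub_nonneg]
  have key : hCoef u v ^ 2 * E ^ 2 + (hCoef u v * (G - tP) - 1 / (u * v)) * E + G / lam + Q
      - (E / u - (tP + 1)) * (hCoef u v * E + G)
      = hCoef u v / v * E ^ 2 + (G / v + (u + v - 1) / (u * v)) * E + G / lam + Q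
        + (tP + 1) * G := by
    unfold hCoef
    field_simp
    ring
  rw [key]
  have : 0 ≤ u + v - 1 := by linarith
  positivity

end RBarU

open RBarU in
theorem statement12 (k lam tP : ℝ) (hk : 0 < k) (hlam : 0 < lam) (htP : 0 < tP) :
    Tendsto (rBarU k lam tP) atTop atTop := by
  have hlow : Tendsto (fun u => exp (u * tP) / u - (tP + 1)) atTop atTop := by
    refine tendsto_atTop_add_const_right _ _ ?_
    simpa [mul_comm] using tendsto_exp_mul_div_rpow_atTop 1 tP htP
  refine tendsto_atTop_mono' atTop ?_ hlow
  filter_upwards [eventually_ge_atTop 1,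
    (tendsto_hCoef_mul_self hk).eventually (ge_mem_nhds (one_div_pos.2 hlam))] with u hu1 hh
  have hu : 0 < u := by linarith
  have hv : 0 < k * u := mul_pos hk hu
  rw [rBarU_eq]
  exact sub_le_ratio hu hv hlam htP.le (by linarith) (gCoef_nonneg hu hv hlam hh)
    (qCoef_nonneg hu hv hlam) (exp_pos _)
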